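/- Let C be an additive category, I a countable filtered poset, and F : I → C a functor such that C admits the colimit of F and such that for every arrow i → j in I the map F(i) → F(j) is a split monomorphism (inclusion of a direct summand). Then for every i ∈ I the canonical map F(i) → colim F is a split monomorphism. -/
import Mathlib


open CategoryTheory Limits

/-- Let `C` be an additive category, `I` a countable filtered poset, and
`F : I ⥤ C` a functor such that `C` admits the colimit of `F` and such that the
image of every arrow `i ⟶ j` of `I` is a split monomorphism (the inclusion of a
direct summand).  Then for every `i` the canonical map `F.obj i ⟶ colimit F` is
a split monomorphism. -/
theorem colimit_ι_isSplitMono_of_maps_isSplitMono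
    {I : Type*} [PartialOrder I] [Countable I] [Nonempty I]
    [IsDirected I (· ≤ ·)]
    {C : Type*} [Category C] [Preadditive C]
    (F : I ⥤ C) [HasColimit F]
    (hsplit : ∀ (i j : I) (h : i ≤ j), IsSplitMono (F.map (homOfLE h))) :
    ∀ i : I, IsSplitMono (colimit.ι F i) := by
  intro i
  -- retractions
  have hret : ∀ (x y : I) (h : x ≤ y), ∃ r : F.obj y ⟶ F.obj x,
      F.map (homOfLE h) ≫ r = 𝟙 (F.obj x) := by
    intro x y h
    haveI := hsplit x y h
    exact ⟨retraction (F.map (homOfLE h)), IsSplitMono.id _⟩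
  choose ret hret using hret
  -- surjection from ℕ
  obtain ⟨f, hf⟩ := exists_surjective_nat I
  -- upper bounds
  have hdir : ∀ x y : I, ∃ z, x ≤ z ∧ y ≤ z := fun x y => directed_of (· ≤ ·) x y
  choose ub hub1 hub2 using hdir
  -- cofinal monotone sequence
  set a : ℕ → I := fun n => Nat.rec (ub i (f 0)) (fun n an => ub an (f (n+1))) n with ha
  have ha0 : i ≤ a 0 := hub1 _ _
  have hastep : ∀ n, a n ≤ a (n+1) := fun n => hub1 _ _
  have hamono : Monotone a := monotone_nat_of_le_succ hastep
  have hfa : ∀ n, f n ≤ a n := by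
    intro n
    cases n with
    | zero => exact hub2 _ _
    | succ n => exact hub2 _ _
  -- composed retractions
  set r : ∀ n : ℕ, F.obj (a n) ⟶ F.obj i :=
    fun n => Nat.rec (ret i (a 0) ha0)
      (fun n rn => ret (a n) (a (n+1)) (hastep n) ≫ rn) n with hr
  have hrkey : ∀ n m (h : n ≤ m), F.map (homOfLE (hamono h)) ≫ r m = r n := by
    intro n m h
    induction m with
    | zero =>
      obtain rfl : n = 0 := Nat.le_zero.mp h
      simp
    | succ m ih =>
      rcases Nat.lt_or_ge n (m+1) with hn | hn
      · have hnm : n ≤ m := Nat.lt_succ_iff.mp hn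
        have : (homOfLE (hamono h) : a n ⟶ a (m+1)) =
            homOfLE (hamono hnm) ≫ homOfLE (hastep m) := rfl
        have h2 : F.map (homOfLE (hastep m)) ≫ ret (a m) (a (m+1)) (hastep m) ≫ r m
            = r m := by rw [← Category.assoc, hret, Category.id_comp]
        rw [this, F.map_comp, Category.assoc]
        show F.map (homOfLE (hamono hnm)) ≫ F.map (homOfLE (hastep m)) ≫
          ret (a m) (a (m+1)) (hastep m) ≫ r m = r n
        rw [h2]
        exact ih hnm
      · obtain rfl : n = m + 1 := le_antisymm h hn
        simp
  have hri : ∀ n (h : i ≤ a n), F.map (homOfLE h) ≫ r n = 𝟙 (F.obj i) := by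
    intro n h
    have : (homOfLE h : (i : I) ⟶ a n) = homOfLE ha0 ≫ homOfLE (hamono (Nat.zero_le n)) := rfl
    rw [this, F.map_comp, Category.assoc, hrkey 0 n (Nat.zero_le n)]
    exact hret _ _ _
  -- independence of choice of n
  have hindep : ∀ (j : I) (n n' : ℕ) (h : j ≤ a n) (h' : j ≤ a n'),
      F.map (homOfLE h) ≫ r n = F.map (homOfLE h') ≫ r n' := by
    have key : ∀ (j : I) (n n' : ℕ) (hle : n ≤ n') (h : j ≤ a n) (h' : j ≤ a n'),
        F.map (homOfLE h) ≫ r n = F.map (homOfLE h') ≫ r n' := by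
      intro j n n' hle h h'
      rw [← hrkey n n' hle, ← Category.assoc, ← F.map_comp]
      rfl
    intro j n n' h h'
    rcases le_total n n' with hle | hle
    · exact key j n n' hle h h'
    · exact (key j n' n hle h' h).symm
  -- index function
  have hnj : ∀ j : I, ∃ n, j ≤ a n := by
    intro j
    obtain ⟨n, rfl⟩ := hf j
    exact ⟨n, hfa n⟩
  choose nj hnj using hnj
  -- the cocone
  set ψ : ∀ j : I, F.obj j ⟶ F.obj i := fun j => F.map (homOfLE (hnj j)) ≫ r (nj j) with hψ
  have hψnat : ∀ (j j' : I) (h : j ≤ j'), F.map (homOfLE h) ≫ ψ j' = ψ j := by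
    intro j j' h
    obtain ⟨p, hp1, hp2⟩ := directed_of (· ≤ ·) (a (nj j)) (a (nj j'))
    obtain ⟨q, hq⟩ := hf p
    have hpq : p ≤ a q := hq ▸ hfa q
    have hj'q : j' ≤ a q := (hnj j').trans (hp2.trans hpq)
    have hjq : j ≤ a q := h.trans hj'q
    rw [hψ]
    simp only
    rw [hindep j' (nj j') q (hnj j') hj'q, hindep j (nj j) q (hnj j) hjq,
      ← Category.assoc, ← F.map_comp]
    rfl
  let c : Cocone F := {
    pt := F.obj i
    ι := {
      app := ψ
      naturality := by
        intro j j' g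
        have h : j ≤ j' := leOfHom g
        have : g = homOfLE h := rfl
        rw [this, hψnat j j' h]
        simp }
  }
  refine ⟨⟨⟨colimit.desc F c, ?_⟩⟩⟩
  rw [colimit.ι_desc]
  show ψ i = 𝟙 (F.obj i)
  exact hri (nj i) (hnj i)
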